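/- If (π*, B*) is an optimal attacker strategy, then the checked passwords appear in nonincreasing bang-for-buck order: for all positions a ≤ b < B*, p(π*(a))·k(π*(b)) ≥ p(π*(b))·k(π*(a)). -/
import Mathlib


open Finset

/-- Success probability λ(π,B): sum of probabilities of the first B guesses. -/
noncomputable def lam (n : ℕ) (p : Fin n → ℝ) (π : Equiv.Perm (Fin n)) (B : ℕ) : ℝ :=
  ∑ t : Fin n, if t.val < B then p (π t) else 0

/-- Attacker utility U(π,B) = v·λ(π,B) − Σ_{t<B} k(π(t))·(1 − λ(π,t)). -/
noncomputable def U (n : ℕ) (p k : Fin n → ℝ) (v : ℝ) (π : Equiv.Perm (Fin n)) (B : ℕ) : ℝ :=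
  v * lam n p π B - ∑ t : Fin n, if t.val < B then k (π t) * (1 - lam n p π t.val) else 0

/-- Cost term of the utility. -/
noncomputable def Fc (n : ℕ) (p k : Fin n → ℝ) (Bstar : ℕ) (π : Equiv.Perm (Fin n))
    (t : Fin n) : ℝ :=
  if t.val < Bstar then k (π t) * (1 - lam n p π t.val) else 0

lemma U_eq (n : ℕ) (p k : Fin n → ℝ) (v : ℝ) (π : Equiv.Perm (Fin n)) (B : ℕ) :
    U n p k v π B = v * lam n p π B - ∑ t : Fin n, Fc n p k B π t := rfl

lemma lam_succ (n : ℕ) (p : Fin n → ℝ) (π : Equiv.Perm (Fin n)) (m : ℕ) (hm : m < n) :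
    lam n p π (m + 1) = lam n p π m + p (π ⟨m, hm⟩) := by
  unfold lam
  have h : ∀ t : Fin n, (if t.val < m + 1 then p (π t) else 0)
      = (if t.val < m then p (π t) else 0) + (if t = ⟨m, hm⟩ then p (π t) else 0) := by
    intro t
    simp only [Fin.ext_iff]
    split_ifs <;> first | omega | ring
  rw [Finset.sum_congr rfl (fun t _ => h t), Finset.sum_add_distrib,
    Finset.sum_ite_eq' Finset.univ ⟨m, hm⟩ (fun t => p (π t))]
  simp

lemma lam_swap_lo (n : ℕ) (p : Fin n → ℝ) (π : Equiv.Perm (Fin n)) (a b : Fin n) (m : ℕ)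
    (ha : m ≤ a.val) (hb : m ≤ b.val) :
    lam n p (π * Equiv.swap a b) m = lam n p π m := by
  unfold lam
  apply Finset.sum_congr rfl
  intro t _
  by_cases h : t.val < m
  · have hta : t ≠ a := by intro e; subst e; omega
    have htb : t ≠ b := by intro e; subst e; omega
    rw [if_pos h, if_pos h]
    simp [Equiv.Perm.mul_apply, Equiv.swap_apply_of_ne_of_ne hta htb]
  · rw [if_neg h, if_neg h]

lemma lam_swap_hi (n : ℕ) (p : Fin n → ℝ) (π : Equiv.Perm (Fin n)) (a b : Fin n) (m : ℕ)
    (ha : a.val < m) (hb : b.val < m) :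
    lam n p (π * Equiv.swap a b) m = lam n p π m := by
  unfold lam
  have hcond : ∀ t : Fin n, ((Equiv.swap a b t).val < m ↔ t.val < m) := by
    intro t
    rcases eq_or_ne t a with rfl | ha'
    · rw [Equiv.swap_apply_left]; omega
    rcases eq_or_ne t b with rfl | hb'
    · rw [Equiv.swap_apply_right]; omega
    · rw [Equiv.swap_apply_of_ne_of_ne ha' hb']
  calc ∑ t : Fin n, (if t.val < m then p ((π * Equiv.swap a b) t) else 0)
      = ∑ t : Fin n, (if (Equiv.swap a b t).val < m then p (π (Equiv.swap a b t)) else 0) := by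
        apply Finset.sum_congr rfl
        intro t _
        simp only [Equiv.Perm.mul_apply, hcond t]
    _ = ∑ t : Fin n, (if t.val < m then p (π t) else 0) :=
        Equiv.sum_comp (Equiv.swap a b) (fun t => if t.val < m then p (π t) else 0)

lemma adjacent (n : ℕ) (p k : Fin n → ℝ) (v : ℝ)
    (πstar : Equiv.Perm (Fin n)) (Bstar : ℕ) (hBstar : Bstar ≤ n)
    (hopt : ∀ (π : Equiv.Perm (Fin n)) (B : ℕ), B ≤ n →
      U n p k v πstar Bstar ≥ U n p k v π B)
    (a b : Fin n) (hab : b.val = a.val + 1) (hb : b.val < Bstar) :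
    p (πstar a) * k (πstar b) ≥ p (πstar b) * k (πstar a) := by
  set πs := πstar * Equiv.swap a b with hπs
  have hne : a ≠ b := by intro e; rw [e] at hab; omega
  have haB : a.val < Bstar := by omega
  have hLa : lam n p πs a.val = lam n p πstar a.val :=
    lam_swap_lo n p πstar a b a.val le_rfl (by omega)
  have hLB : lam n p πs Bstar = lam n p πstar Bstar :=
    lam_swap_hi n p πstar a b Bstar haB hb
  have hπsa : πs a = πstar b := by
    simp [hπs, Equiv.Perm.mul_apply, Equiv.swap_apply_left]
  have hπsb : πs b = πstar a := by
    simp [hπs, Equiv.Perm.mul_apply, Equiv.swap_apply_right]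
  have han : a.val < n := a.isLt
  -- lam at b.val = a.val + 1
  have hbav : (b : ℕ) = a.val + 1 := hab
  have hLsb : lam n p πs b.val = lam n p πstar a.val + p (πstar b) := by
    rw [hbav, lam_succ n p πs a.val han]
    have h0 : (⟨a.val, han⟩ : Fin n) = a := rfl
    try rw [h0]
    try rw [hπsa]
    try rw [hLa]
  have hLb : lam n p πstar b.val = lam n p πstar a.val + p (πstar a) := by
    rw [hbav, lam_succ n p πstar a.val han]
  -- the Fc terms
  have hFa : Fc n p k Bstar πs a = k (πstar b) * (1 - lam n p πstar a.val) := by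
    unfold Fc; rw [if_pos haB, hπsa, hLa]
  have hFb : Fc n p k Bstar πs b = k (πstar a) * (1 - (lam n p πstar a.val + p (πstar b))) := by
    unfold Fc; rw [if_pos hb, hπsb, hLsb]
  have hFa' : Fc n p k Bstar πstar a = k (πstar a) * (1 - lam n p πstar a.val) := by
    unfold Fc; rw [if_pos haB]
  have hFb' : Fc n p k Bstar πstar b
      = k (πstar b) * (1 - (lam n p πstar a.val + p (πstar a))) := by
    unfold Fc; rw [if_pos hb, hLb]
  have hdiff : ∀ t : Fin n, t ≠ a → t ≠ b → Fc n p k Bstar πs t = Fc n p k Bstar πstar t := by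
    intro t hta htb
    unfold Fc
    by_cases h : t.val < Bstar
    · rw [if_pos h, if_pos h]
      have hπst : πs t = πstar t := by
        simp [hπs, Equiv.Perm.mul_apply, Equiv.swap_apply_of_ne_of_ne hta htb]
      have htav : t.val ≠ a.val := fun e => hta (Fin.ext e)
      have htbv : t.val ≠ b.val := fun e => htb (Fin.ext e)
      have hL : lam n p πs t.val = lam n p πstar t.val := by
        rcases lt_or_gt_of_ne htav with h1 | h1
        · exact lam_swap_lo n p πstar a b t.val (by omega) (by omega)
        · exact lam_swap_hi n p πstar a b t.val (by omega) (by omega)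
      rw [hπst, hL]
    · rw [if_neg h, if_neg h]
  have hsum : (∑ t : Fin n, Fc n p k Bstar πs t) - (∑ t : Fin n, Fc n p k Bstar πstar t)
      = (Fc n p k Bstar πs a - Fc n p k Bstar πstar a)
        + (Fc n p k Bstar πs b - Fc n p k Bstar πstar b) := by
    have h0 : ∑ x : Fin n, (Fc n p k Bstar πs x - Fc n p k Bstar πstar x)
        = ∑ x ∈ ({a, b} : Finset (Fin n)), (Fc n p k Bstar πs x - Fc n p k Bstar πstar x) := by
      refine (Finset.sum_subset (Finset.subset_univ _) ?_).symm
      intro t _ ht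
      simp only [Finset.mem_insert, Finset.mem_singleton, not_or] at ht
      rw [hdiff t ht.1 ht.2]; ring
    rw [← Finset.sum_sub_distrib, h0, Finset.sum_pair hne]
  have key := hopt πs Bstar hBstar
  rw [U_eq, U_eq, hLB] at key
  -- key : v * lam π* B - Σ Fc π* ≥ v * lam π* B - Σ Fc πs
  have hsge : (∑ t : Fin n, Fc n p k Bstar πs t) ≥ (∑ t : Fin n, Fc n p k Bstar πstar t) := by
    linarith
  rw [hFa, hFb, hFa', hFb'] at hsum
  nlinarith [hsum, hsge]

theorem stmt_7 (n : ℕ) (p k : Fin n → ℝ) (v : ℝ)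
    (hp : ∀ i, 0 ≤ p i) (hpsum : ∑ i, p i ≤ 1) (hk : ∀ i, 0 < k i) (hv : 0 ≤ v)
    (πstar : Equiv.Perm (Fin n)) (Bstar : ℕ) (hBstar : Bstar ≤ n)
    (hopt : ∀ (π : Equiv.Perm (Fin n)) (B : ℕ), B ≤ n →
      U n p k v πstar Bstar ≥ U n p k v π B) :
    ∀ a b : Fin n, a ≤ b → b.val < Bstar →
      p (πstar a) * k (πstar b) ≥ p (πstar b) * k (πstar a) := by
  have main : ∀ d : ℕ, ∀ a b : Fin n, b.val = a.val + d → b.val < Bstar →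
      p (πstar a) * k (πstar b) ≥ p (πstar b) * k (πstar a) := by
    intro d
    induction d with
    | zero =>
      intro a b h hB
      have : a = b := Fin.ext (by omega)
      subst this
      exact le_refl _
    | succ d ih =>
      intro a b h hB
      have hc : a.val + 1 < n := by omega
      set c : Fin n := ⟨a.val + 1, hc⟩ with hcdef
      have hcB : c.val < Bstar := by simp [hcdef]; omega
      have h1 := adjacent n p k v πstar Bstar hBstar hopt a c rfl hcB
      have h2 := ih c b (by simp [hcdef]; omega) hB
      nlinarith [h1, h2, hk (πstar a), hk (πstar b), hk (πstar c), hp (πstar a),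
        hp (πstar b), hp (πstar c)]
  intro a b hab hbB
  exact main (b.val - a.val) a b (by omega) hbB
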